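/- arXiv:1511.08949 — 5 statements merged into one kernel-verified Lean document; each statement's English description precedes it below -/
import Mathlib

section
/- For all real numbers h, ρ, s with ρ, s > 0, (h²/9)·(ρs)³ + (h/3)·(ρs)²·(ρ+s) + (1/12)·(ρ+s)⁴ ≥ (1/(3√3))·(ρs)²·(ρ+s)·|h + (3/2)·(1/ρ + 1/s)|. -/
/-!
Put `P = ρs`, `S = ρ + s` and `u = |hP + 3S/2| = P·|h + (3/2)(1/ρ + 1/s)|`. Completing the square in
`hP` turns the left side into `(P/9)u² - PS²/4 + S⁴/12`, and the right side is `(√3/9)PSu`. Their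
difference is `(P/9)(u - √3S/2)² + S²(S² - 4P)/12`, which is nonnegative since `4ρs ≤ (ρ + s)²`.
-/

open Real

lemma sqrt_three_mul_le_of_four_mul_le_sq {P S : ℝ} (hP : 0 ≤ P) (hPS : 4 * P ≤ S ^ 2) (u : ℝ) :
    √3 / 9 * P * S * u ≤ P / 9 * u ^ 2 - P * S ^ 2 / 4 + S ^ 4 / 12 := by
  have h3 : √3 ^ 2 = 3 := sq_sqrt (by norm_num)
  have hsq : 0 ≤ P / 9 * (u - √3 * S / 2) ^ 2 := by positivity
  have hgap : 0 ≤ S ^ 2 / 12 * (S ^ 2 - 4 * P) := by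
    have := sub_nonneg.2 hPS
    positivity
  have hdiff : P / 9 * u ^ 2 - P * S ^ 2 / 4 + S ^ 4 / 12 - √3 / 9 * P * S * u
      = P / 9 * (u - √3 * S / 2) ^ 2 + S ^ 2 / 12 * (S ^ 2 - 4 * P) := by
    linear_combination (-(P * S ^ 2) / 36) * h3
  linarith

lemma one_div_three_mul_sqrt_three : 1 / (3 * √3) = √3 / 9 := by
  have h3 : √3 ^ 2 = 3 := sq_sqrt (by norm_num)
  have : √3 ≠ 0 := by positivity
  field_simp
  linarith

lemma mul_abs_add_harmonic {ρ s : ℝ} (hρ : 0 < ρ) (hs : 0 < s) (h : ℝ) :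
    ρ * s * |h + (3 / 2) * (1 / ρ + 1 / s)| = |h * (ρ * s) + 3 / 2 * (ρ + s)| := by
  rw [← abs_of_pos (mul_pos hρ hs), ← abs_mul, abs_of_pos (mul_pos hρ hs)]
  congr 1
  field_simp
  ring

theorem stmt_1 (h ρ s : ℝ) (hρ : 0 < ρ) (hs : 0 < s) :
    (h ^ 2 / 9) * (ρ * s) ^ 3 + (h / 3) * (ρ * s) ^ 2 * (ρ + s)
      + (1 / 12) * (ρ + s) ^ 4
    ≥ (1 / (3 * Real.sqrt 3)) * (ρ * s) ^ 2 * (ρ + s)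
        * |h + (3 / 2) * (1 / ρ + 1 / s)| := by
  set P := ρ * s
  set S := ρ + s
  have hu := mul_abs_add_harmonic hρ hs h
  set u := |h * P + 3 / 2 * S|
  have hu2 : u ^ 2 = (h * P + 3 / 2 * S) ^ 2 := sq_abs _
  have lhs : (h ^ 2 / 9) * P ^ 3 + (h / 3) * P ^ 2 * S + (1 / 12) * S ^ 4
      = P / 9 * u ^ 2 - P * S ^ 2 / 4 + S ^ 4 / 12 := by
    rw [hu2]; ring
  have rhs : (1 / (3 * √3)) * P ^ 2 * S * |h + (3 / 2) * (1 / ρ + 1 / s)| = √3 / 9 * P * S * u := by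
    rw [one_div_three_mul_sqrt_three, ← hu]; ring
  rw [ge_iff_le, lhs, rhs]
  exact sqrt_three_mul_le_of_four_mul_le_sq (mul_pos hρ hs).le
    ((mul_assoc _ _ _).symm.trans_le (four_mul_le_sq_add ρ s)) u
end

section
/- Let a < c < b be real numbers and h a real number. Define k : ℝ × ℝ → ℝ by k(x,t) = x − t for a ≤ t ≤ x ≤ c and for c ≤ t ≤ x ≤ b, and k(x,t) = (x − t) + h·(c − t)·(x − c) for a ≤ t ≤ c ≤ x ≤ b. Then ∫ₐᵇ (∫ₐˣ k(x,t)² dt) dx = (h²/9)(ρs)³ + (h/3)(ρs)²(ρ+s) + (1/12)(ρ+s)⁴, where ρ = c − a and s = b − c. -/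
/-!
For `x ≤ c` the kernel is `x - t`, so the inner integral is `(x - a)³ / 3`. For `x ≥ c` split the
inner integral at `t = c`: on `[a, c]` the kernel is affine in `c - t`, namely
`(x - c) + (1 + h (x - c)) (c - t)`, and on `[c, x]` it is `x - t`. The inner integral is thus a cubic
polynomial in `x - c`, and the outer integral over `[c, b]` is computed termwise.
-/

open intervalIntegral Set

/-- The kernel `k` of the statement, written with positive parts so that it is visibly continuous. -/
noncomputable def cauchyKernel (c h x t : ℝ) : ℝ :=
  x - t + h * max (c - t) 0 * max (x - c) 0

section CauchyKernel

variable {c h x t : ℝ}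

theorem ite_eq_cauchyKernel :
    (if t ≤ c ∧ c ≤ x then (x - t) + h * (c - t) * (x - c) else x - t) = cauchyKernel c h x t := by
  unfold cauchyKernel
  split_ifs with hcase
  · rw [max_eq_left (sub_nonneg.2 hcase.1), max_eq_left (sub_nonneg.2 hcase.2)]
  · rcases le_or_gt t c with ht | ht
    · rw [max_eq_right (sub_nonpos.2 (not_le.1 fun hx => hcase ⟨ht, hx⟩).le)]
      ring
    · rw [max_eq_right (sub_nonpos.2 ht.le)]
      ring

theorem cauchyKernel_of_le (hx : x ≤ c) : cauchyKernel c h x t = x - t := by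
  simp [cauchyKernel, max_eq_right (sub_nonpos.2 hx)]

theorem cauchyKernel_of_ge (ht : c ≤ t) : cauchyKernel c h x t = x - t := by
  simp [cauchyKernel, max_eq_right (sub_nonpos.2 ht)]

theorem cauchyKernel_of_le_of_le (ht : t ≤ c) (hx : c ≤ x) :
    cauchyKernel c h x t = (x - c) + (1 + h * (x - c)) * (c - t) := by
  rw [cauchyKernel, max_eq_left (sub_nonneg.2 ht), max_eq_left (sub_nonneg.2 hx)]
  ring

variable (c h) in
theorem continuous_cauchyKernel : Continuous fun p : ℝ × ℝ => cauchyKernel c h p.1 p.2 := by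
  unfold cauchyKernel
  fun_prop

end CauchyKernel

theorem integral_cubic (A B C D s : ℝ) :
    ∫ y in (0 : ℝ)..s, (A + B * y + C * y ^ 2 + D * y ^ 3)
      = A * s + B * s ^ 2 / 2 + C * s ^ 3 / 3 + D * s ^ 4 / 4 := by
  have hint (f : ℝ → ℝ) (hf : Continuous f) : IntervalIntegrable f MeasureTheory.volume 0 s :=
    hf.intervalIntegrable 0 s
  rw [integral_add (hint _ (by fun_prop)) (hint _ (by fun_prop)),
    integral_add (hint _ (by fun_prop)) (hint _ (by fun_prop)),
    integral_add (hint _ (by fun_prop)) (hint _ (by fun_prop)),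
    integral_const, integral_const_mul, integral_id, integral_const_mul, integral_pow,
    integral_const_mul, integral_pow, smul_eq_mul]
  ring

theorem integral_cubic_comp_sub (A B C D c b : ℝ) :
    ∫ x in c..b, (A + B * (x - c) + C * (x - c) ^ 2 + D * (x - c) ^ 3)
      = A * (b - c) + B * (b - c) ^ 2 / 2 + C * (b - c) ^ 3 / 3 + D * (b - c) ^ 4 / 4 := by
  rw [integral_comp_sub_right (fun y => A + B * y + C * y ^ 2 + D * y ^ 3), sub_self,
    integral_cubic]

theorem integral_affine_sq (p q r : ℝ) :
    ∫ u in (0 : ℝ)..r, (p + q * u) ^ 2 = p ^ 2 * r + p * q * r ^ 2 + q ^ 2 * r ^ 3 / 3 := by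
  simp_rw [show ∀ u : ℝ, (p + q * u) ^ 2 = p ^ 2 + 2 * p * q * u + q ^ 2 * u ^ 2 + 0 * u ^ 3 by
    intro u; ring]
  rw [integral_cubic]
  ring

theorem integral_sub_sq (l x : ℝ) : ∫ t in l..x, (x - t) ^ 2 = (x - l) ^ 3 / 3 := by
  rw [integral_comp_sub_left (fun u => u ^ 2), sub_self, integral_pow]
  ring

section Integrals

variable {a b c h x : ℝ}

theorem integral_cauchyKernel_sq_of_le (hx : x ≤ c) :
    ∫ t in a..x, cauchyKernel c h x t ^ 2 = (x - a) ^ 3 / 3 := by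
  simp_rw [cauchyKernel_of_le hx]
  exact integral_sub_sq a x

theorem integral_cauchyKernel_sq_of_ge (hac : a ≤ c) (hx : c ≤ x) :
    ∫ t in a..x, cauchyKernel c h x t ^ 2
      = (x - c) ^ 2 * (c - a) + (x - c) * (1 + h * (x - c)) * (c - a) ^ 2
        + (1 + h * (x - c)) ^ 2 * (c - a) ^ 3 / 3 + (x - c) ^ 3 / 3 := by
  have hint (l u : ℝ) :
      IntervalIntegrable (fun t => cauchyKernel c h x t ^ 2) MeasureTheory.volume l u :=
    (((continuous_cauchyKernel c h).comp (Continuous.prodMk_right x)).pow 2).intervalIntegrable l u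
  have left : ∫ t in a..c, cauchyKernel c h x t ^ 2
      = ∫ t in a..c, ((x - c) + (1 + h * (x - c)) * (c - t)) ^ 2 :=
    integral_congr fun t ht => by
      rw [cauchyKernel_of_le_of_le (uIcc_of_le hac ▸ ht).2 hx]
  have right : ∫ t in c..x, cauchyKernel c h x t ^ 2 = ∫ t in c..x, (x - t) ^ 2 :=
    integral_congr fun t ht => by
      rw [cauchyKernel_of_ge (uIcc_of_le hx ▸ ht).1]
  rw [← integral_add_adjacent_intervals (hint a c) (hint c x), left, right, integral_sub_sq,
    integral_comp_sub_left (fun u => ((x - c) + (1 + h * (x - c)) * u) ^ 2), sub_self,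
    integral_affine_sq]

theorem continuous_integral_cauchyKernel_sq (a c h : ℝ) :
    Continuous fun x => ∫ t in a..x, cauchyKernel c h x t ^ 2 :=
  continuous_parametric_intervalIntegral_of_continuous
    (f := fun x t => cauchyKernel c h x t ^ 2) (by exact (continuous_cauchyKernel c h).pow 2)
    continuous_id

theorem integral_integral_cauchyKernel_sq_left (h : ℝ) (hac : a ≤ c) :
    ∫ x in a..c, ∫ t in a..x, cauchyKernel c h x t ^ 2 = (c - a) ^ 4 / 12 := by
  rw [integral_congr (g := fun x => (x - a) ^ 3 / 3) fun x hx =>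
      integral_cauchyKernel_sq_of_le (uIcc_of_le hac ▸ hx).2,
    integral_div, integral_comp_sub_right (fun y => y ^ 3), sub_self, integral_pow]
  ring

theorem integral_integral_cauchyKernel_sq_right (h : ℝ) (hac : a ≤ c) (hcb : c ≤ b) :
    ∫ x in c..b, ∫ t in a..x, cauchyKernel c h x t ^ 2
      = (c - a) ^ 3 * (b - c) / 3 + (c - a) ^ 2 * (b - c) ^ 2 / 2 + (c - a) * (b - c) ^ 3 / 3
        + (b - c) ^ 4 / 12 + h * ((c - a) ^ 3 * (b - c) ^ 2 + (c - a) ^ 2 * (b - c) ^ 3) / 3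
        + h ^ 2 * (c - a) ^ 3 * (b - c) ^ 3 / 9 := by
  have hinner : EqOn (fun x => ∫ t in a..x, cauchyKernel c h x t ^ 2)
      (fun x => (c - a) ^ 3 / 3 + ((c - a) ^ 2 + 2 * h * (c - a) ^ 3 / 3) * (x - c)
        + ((c - a) + h * (c - a) ^ 2 + h ^ 2 * (c - a) ^ 3 / 3) * (x - c) ^ 2 + 1 / 3 * (x - c) ^ 3)
      (uIcc c b) := fun x hx => by
    dsimp only
    rw [integral_cauchyKernel_sq_of_ge hac (uIcc_of_le hcb ▸ hx).1]
    ring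
  rw [integral_congr hinner, integral_cubic_comp_sub]
  ring

end Integrals

theorem stmt_3 (a c b h : ℝ) (hac : a < c) (hcb : c < b)
    (k : ℝ → ℝ → ℝ)
    (hk : ∀ x t, k x t = if t ≤ c ∧ c ≤ x then (x - t) + h * (c - t) * (x - c) else x - t) :
    ∫ x in a..b, (∫ t in a..x, (k x t) ^ 2)
    = (h ^ 2 / 9) * ((c - a) * (b - c)) ^ 3
      + (h / 3) * ((c - a) * (b - c)) ^ 2 * ((c - a) + (b - c))
      + (1 / 12) * ((c - a) + (b - c)) ^ 4 := by
  obtain rfl : k = cauchyKernel c h := funext₂ fun x t => (hk x t).trans ite_eq_cauchyKernel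
  have hF := continuous_integral_cauchyKernel_sq a c h
  rw [← integral_add_adjacent_intervals (hF.intervalIntegrable a c) (hF.intervalIntegrable c b),
    integral_integral_cauchyKernel_sq_left h hac.le,
    integral_integral_cauchyKernel_sq_right h hac.le hcb.le]
  ring
end

section
/- Let Φ, Ψ : [a,b] → ℝ (or ℂ) be square-integrable functions and define K(x,t) so that |K(x,t)| ≤ |Ψ(x)||Φ(t)| + |Φ(x)||Ψ(t)| for all a ≤ t ≤ x ≤ b. Then ∫ₐᵇ (|Φ(x)|² + |Ψ(x)|²) dx ≥ √2 · ( ∫ₐᵇ ∫ₐˣ |K(x,t)|² dt dx )^{1/2}. -/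
/-!
Since `(p + q)² ≤ 2 (p² + q²)`, the hypothesis gives
`|K x t|² ≤ 2 (|Ψ x|² |Φ t|² + |Φ x|² |Ψ t|²)`, and the right-hand side is symmetric in `(x, t)`.
Its integral over the triangle `t < x` is thus at most half of its integral over the square,
which is `4 ‖Φ‖² ‖Ψ‖²`. Hence `∫∫ |K|² ≤ 2 ‖Φ‖² ‖Ψ‖²`, and the arithmetic-geometric mean inequality
`2 ‖Φ‖ ‖Ψ‖ ≤ ‖Φ‖² + ‖Ψ‖²` finishes the proof.
-/

open MeasureTheory Set

theorem ofReal_integral_le_lintegral_ofReal {α : Type*} [MeasurableSpace α]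
    {μ : Measure α} {f : α → ℝ} (hf : 0 ≤ᵐ[μ] f) :
    ENNReal.ofReal (∫ a, f a ∂μ) ≤ ∫⁻ a, ENNReal.ofReal (f a) ∂μ := by
  by_cases hfi : Integrable f μ
  · exact (ofReal_integral_eq_lintegral_ofReal hfi hf).le
  · simp [integral_undef hfi]

section Symmetrization

variable {α : Type*} [MeasurableSpace α] {μ : Measure α} [SFinite μ]

theorem two_mul_setLIntegral_le_lintegral_of_disjoint_swap {s : Set (α × α)}
    (hs : MeasurableSet s) (hdisj : Disjoint s (Prod.swap ⁻¹' s)) {h : α × α → ENNReal}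
    (hsymm : ∀ p, h p.swap = h p) :
    2 * ∫⁻ p in s, h p ∂μ.prod μ ≤ ∫⁻ p, h p ∂μ.prod μ := by
  have hswap : ∫⁻ p in Prod.swap ⁻¹' s, h p ∂μ.prod μ = ∫⁻ p in s, h p ∂μ.prod μ := by
    simpa only [hsymm] using (Measure.measurePreserving_swap).setLIntegral_comp_preimage_emb
      MeasurableEquiv.prodComm.measurableEmbedding h s
  calc 2 * ∫⁻ p in s, h p ∂μ.prod μ
      = ∫⁻ p in s ∪ Prod.swap ⁻¹' s, h p ∂μ.prod μ := by
        rw [lintegral_union (hs.preimage measurable_swap) hdisj, hswap, two_mul]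
    _ ≤ ∫⁻ p, h p ∂μ.prod μ := setLIntegral_le_lintegral _ _

theorem setLIntegral_mul_add_mul_le_of_disjoint_swap {s : Set (α × α)}
    (hs : MeasurableSet s) (hdisj : Disjoint s (Prod.swap ⁻¹' s)) {f g : α → ENNReal}
    (hf : AEMeasurable f μ) (hg : AEMeasurable g μ) :
    ∫⁻ p in s, (g p.1 * f p.2 + f p.1 * g p.2) ∂μ.prod μ ≤ (∫⁻ x, f x ∂μ) * ∫⁻ x, g x ∂μ := by
  refine (ENNReal.mul_le_mul_iff_right (a := 2) two_ne_zero ENNReal.ofNat_ne_top).mp ?_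
  calc 2 * ∫⁻ p in s, (g p.1 * f p.2 + f p.1 * g p.2) ∂μ.prod μ
      ≤ ∫⁻ p, (g p.1 * f p.2 + f p.1 * g p.2) ∂μ.prod μ :=
        two_mul_setLIntegral_le_lintegral_of_disjoint_swap hs hdisj fun p => by
          simp only [Prod.fst_swap, Prod.snd_swap]; ring
    _ = 2 * ((∫⁻ x, f x ∂μ) * ∫⁻ x, g x ∂μ) := by
        have hgf : AEMeasurable (fun p : α × α => g p.1 * f p.2) (μ.prod μ) :=
          hg.comp_fst.mul hf.comp_snd
        rw [lintegral_add_left' hgf, lintegral_prod_mul hg hf,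
          lintegral_prod_mul hf hg, mul_comm (∫⁻ x, g x ∂μ), two_mul]

end Symmetrization

theorem lintegral_setLIntegral_Iio_mul_add_mul_le {α : Type*} [MeasurableSpace α]
    [TopologicalSpace α] [LinearOrder α] [OrderClosedTopology α] [SecondCountableTopology α]
    [OpensMeasurableSpace α] {μ : Measure α} [SFinite μ] {f g : α → ENNReal}
    (hf : AEMeasurable f μ) (hg : AEMeasurable g μ) :
    ∫⁻ x, ∫⁻ t in Iio x, (g x * f t + f x * g t) ∂μ ∂μ ≤ (∫⁻ x, f x ∂μ) * ∫⁻ x, g x ∂μ := by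
  set s : Set (α × α) := {p | p.2 < p.1}
  have hs : MeasurableSet s := measurableSet_lt measurable_snd measurable_fst
  have hdisj : Disjoint s (Prod.swap ⁻¹' s) :=
    Set.disjoint_left.mpr fun p hp hp' => lt_asymm hp hp'
  calc ∫⁻ x, ∫⁻ t in Iio x, (g x * f t + f x * g t) ∂μ ∂μ
      = ∫⁻ p in s, (g p.1 * f p.2 + f p.1 * g p.2) ∂μ.prod μ := by
        rw [← lintegral_indicator hs, lintegral_prod _ ?_]
        · refine lintegral_congr fun x => ?_
          rw [← lintegral_indicator measurableSet_Iio]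
          rfl
        · exact ((hg.comp_fst.mul hf.comp_snd).add (hf.comp_fst.mul hg.comp_snd)).indicator hs
    _ ≤ (∫⁻ x, f x ∂μ) * ∫⁻ x, g x ∂μ :=
        setLIntegral_mul_add_mul_le_of_disjoint_swap hs hdisj hf hg

theorem Real.sqrt_two_mul_sqrt_le_add_of_le_two_mul {I A B : ℝ} (hA : 0 ≤ A) (hB : 0 ≤ B)
    (hI : I ≤ 2 * (A * B)) : √2 * √I ≤ A + B := by
  calc √2 * √I = √(2 * I) := (Real.sqrt_mul zero_le_two I).symm
    _ ≤ √((A + B) ^ 2) := Real.sqrt_le_sqrt (by nlinarith [sq_nonneg (A - B)])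
    _ = A + B := Real.sqrt_sq (add_nonneg hA hB)

theorem sq_le_two_mul_of_abs_le_add {k p q : ℝ} (h : |k| ≤ p + q) :
    k ^ 2 ≤ 2 * (p ^ 2 + q ^ 2) :=
  calc k ^ 2 = |k| ^ 2 := (sq_abs k).symm
    _ ≤ (p + q) ^ 2 := pow_le_pow_left₀ (abs_nonneg k) h 2
    _ ≤ 2 * (p ^ 2 + q ^ 2) := add_sq_le

theorem ofReal_sq_le_of_abs_le_mul_add_mul {k p q r s : ℝ} (h : |k| ≤ |p| * |q| + |r| * |s|) :
    ENNReal.ofReal (|k| ^ 2) ≤ 2 * (ENNReal.ofReal (|p| ^ 2) * ENNReal.ofReal (|q| ^ 2)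
      + ENNReal.ofReal (|r| ^ 2) * ENNReal.ofReal (|s| ^ 2)) := by
  calc ENNReal.ofReal (|k| ^ 2) ≤ ENNReal.ofReal (2 * ((|p| * |q|) ^ 2 + (|r| * |s|) ^ 2)) :=
        ENNReal.ofReal_le_ofReal (sq_abs k ▸ sq_le_two_mul_of_abs_le_add h)
    _ = _ := by
        rw [ENNReal.ofReal_mul zero_le_two, ENNReal.ofReal_add (by positivity) (by positivity),
          mul_pow, mul_pow, ENNReal.ofReal_mul (by positivity), ENNReal.ofReal_mul (by positivity),
          ENNReal.ofReal_ofNat]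

theorem ofReal_intervalIntegral_sq_le_setLIntegral_Iio {a b x : ℝ} (hx : x ∈ Ioc a b)
    {Φ Ψ : ℝ → ℝ} {K : ℝ → ℝ → ℝ}
    (hK : ∀ x t, a ≤ t → t ≤ x → x ≤ b → |K x t| ≤ |Ψ x| * |Φ t| + |Φ x| * |Ψ t|) :
    ENNReal.ofReal (∫ t in a..x, |K x t| ^ 2)
      ≤ 2 * ∫⁻ t in Iio x, (ENNReal.ofReal (|Ψ x| ^ 2) * ENNReal.ofReal (|Φ t| ^ 2)
        + ENNReal.ofReal (|Φ x| ^ 2) * ENNReal.ofReal (|Ψ t| ^ 2)) ∂volume.restrict (Ioc a b) := by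
  obtain ⟨hax, hxb⟩ := hx
  set F : ℝ → ENNReal := fun t => ENNReal.ofReal (|Φ t| ^ 2)
  set G : ℝ → ENNReal := fun t => ENNReal.ofReal (|Ψ t| ^ 2)
  rw [← lintegral_const_mul' _ _ ENNReal.ofNat_ne_top, Measure.restrict_restrict measurableSet_Iio,
    intervalIntegral.integral_of_le hax.le]
  calc ENNReal.ofReal (∫ t in Ioc a x, |K x t| ^ 2)
      ≤ ∫⁻ t in Ioc a x, ENNReal.ofReal (|K x t| ^ 2) :=
        ofReal_integral_le_lintegral_ofReal (ae_of_all _ fun _ => sq_nonneg _)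
    _ ≤ ∫⁻ t in Ioc a x, 2 * (G x * F t + F x * G t) :=
        setLIntegral_mono' measurableSet_Ioc fun t ht =>
          ofReal_sq_le_of_abs_le_mul_add_mul (hK x t ht.1.le ht.2 hxb)
    -- pass to the open triangle, which is disjoint from its mirror image
    _ = ∫⁻ t in Ioo a x, 2 * (G x * F t + F x * G t) := setLIntegral_congr Ioo_ae_eq_Ioc.symm
    _ ≤ ∫⁻ t in Iio x ∩ Ioc a b, 2 * (G x * F t + F x * G t) :=
        lintegral_mono_set fun t ht => ⟨ht.2, ht.1, ht.2.le.trans hxb⟩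

theorem integral_integral_sq_le_two_mul {a b : ℝ} (hab : a ≤ b) {Φ Ψ : ℝ → ℝ} {K : ℝ → ℝ → ℝ}
    (hΦ : IntervalIntegrable (fun x => |Φ x| ^ 2) volume a b)
    (hΨ : IntervalIntegrable (fun x => |Ψ x| ^ 2) volume a b)
    (hK : ∀ x t, a ≤ t → t ≤ x → x ≤ b → |K x t| ≤ |Ψ x| * |Φ t| + |Φ x| * |Ψ t|) :
    ∫ x in a..b, ∫ t in a..x, |K x t| ^ 2
      ≤ 2 * ((∫ x in a..b, |Φ x| ^ 2) * ∫ x in a..b, |Ψ x| ^ 2) := by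
  set ν := volume.restrict (Ioc a b)
  set F : ℝ → ENNReal := fun t => ENNReal.ofReal (|Φ t| ^ 2)
  set G : ℝ → ENNReal := fun t => ENNReal.ofReal (|Ψ t| ^ 2)
  have lintegral_ofReal_eq {f : ℝ → ℝ} (hf : IntervalIntegrable (fun x => |f x| ^ 2) volume a b) :
      ∫⁻ x, ENNReal.ofReal (|f x| ^ 2) ∂ν = ENNReal.ofReal (∫ x in a..b, |f x| ^ 2) := by
    rw [intervalIntegral.integral_of_le hab]
    exact (ofReal_integral_eq_lintegral_ofReal ((intervalIntegrable_iff_integrableOn_Ioc_of_le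
      hab).mp hf) (ae_of_all _ fun _ => sq_nonneg _)).symm
  have hA : 0 ≤ ∫ x in a..b, |Φ x| ^ 2 := intervalIntegral.integral_nonneg hab fun _ _ => sq_nonneg _
  have hB : 0 ≤ ∫ x in a..b, |Ψ x| ^ 2 := intervalIntegral.integral_nonneg hab fun _ _ => sq_nonneg _
  refine (ENNReal.ofReal_le_ofReal_iff (by positivity)).mp ?_
  rw [intervalIntegral.integral_of_le hab]
  calc ENNReal.ofReal (∫ x in Ioc a b, ∫ t in a..x, |K x t| ^ 2)
      ≤ ∫⁻ x, ENNReal.ofReal (∫ t in a..x, |K x t| ^ 2) ∂ν :=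
        ofReal_integral_le_lintegral_ofReal <| (ae_restrict_iff' measurableSet_Ioc).mpr <|
          ae_of_all _ fun x hx => intervalIntegral.integral_nonneg hx.1.le fun _ _ => sq_nonneg _
    _ ≤ ∫⁻ x, 2 * ∫⁻ t in Iio x, (G x * F t + F x * G t) ∂ν ∂ν :=
        setLIntegral_mono' measurableSet_Ioc fun x hx =>
          ofReal_intervalIntegral_sq_le_setLIntegral_Iio hx hK
    _ = 2 * ∫⁻ x, ∫⁻ t in Iio x, (G x * F t + F x * G t) ∂ν ∂ν :=
        lintegral_const_mul' _ _ ENNReal.ofNat_ne_top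
    _ ≤ 2 * ((∫⁻ x, F x ∂ν) * ∫⁻ x, G x ∂ν) := by
        gcongr
        exact lintegral_setLIntegral_Iio_mul_add_mul_le
          (((intervalIntegrable_iff_integrableOn_Ioc_of_le hab).mp hΦ).aemeasurable.ennreal_ofReal)
          (((intervalIntegrable_iff_integrableOn_Ioc_of_le hab).mp hΨ).aemeasurable.ennreal_ofReal)
    _ = ENNReal.ofReal (2 * ((∫ x in a..b, |Φ x| ^ 2) * ∫ x in a..b, |Ψ x| ^ 2)) := by
        rw [lintegral_ofReal_eq hΦ, lintegral_ofReal_eq hΨ, ENNReal.ofReal_mul zero_le_two,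
          ENNReal.ofReal_mul hA, ENNReal.ofReal_ofNat]

theorem stmt_5_general (a b : ℝ) (hab : a ≤ b) (Φ Ψ : ℝ → ℝ) (K : ℝ → ℝ → ℝ)
    (hΦ : IntegrableOn (fun x => |Φ x| ^ 2) (Set.Icc a b))
    (hΨ : IntegrableOn (fun x => |Ψ x| ^ 2) (Set.Icc a b))
    (hK : ∀ x t, a ≤ t → t ≤ x → x ≤ b →
      |K x t| ≤ |Ψ x| * |Φ t| + |Φ x| * |Ψ t|) :
    ∫ x in a..b, (|Φ x| ^ 2 + |Ψ x| ^ 2)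
      ≥ Real.sqrt 2 * Real.sqrt (∫ x in a..b, (∫ t in a..x, |K x t| ^ 2)) := by
  have hΦi := (intervalIntegrable_iff_integrableOn_Icc_of_le hab).mpr hΦ
  have hΨi := (intervalIntegrable_iff_integrableOn_Icc_of_le hab).mpr hΨ
  rw [ge_iff_le, intervalIntegral.integral_add hΦi hΨi]
  exact Real.sqrt_two_mul_sqrt_le_add_of_le_two_mul
    (intervalIntegral.integral_nonneg hab fun _ _ => sq_nonneg _)
    (intervalIntegral.integral_nonneg hab fun _ _ => sq_nonneg _)
    (integral_integral_sq_le_two_mul hab hΦi hΨi hK)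

theorem stmt_5 (a b : ℝ) (h0a : 0 ≤ a) (hab : a ≤ b) (Φ Ψ : ℝ → ℝ) (K : ℝ → ℝ → ℝ)
    (hΦ : IntegrableOn (fun x => |Φ x| ^ 2) (Set.Icc a b))
    (hΨ : IntegrableOn (fun x => |Ψ x| ^ 2) (Set.Icc a b))
    (hΦm : AEStronglyMeasurable Φ (volume.restrict (Set.Icc a b)))
    (hΨm : AEStronglyMeasurable Ψ (volume.restrict (Set.Icc a b)))
    (hKm : Measurable fun p : ℝ × ℝ => K p.1 p.2)
    (hK : ∀ x t, a ≤ t → t ≤ x → x ≤ b →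
      |K x t| ≤ |Ψ x| * |Φ t| + |Φ x| * |Ψ t|) :
    ∫ x in a..b, (|Φ x| ^ 2 + |Ψ x| ^ 2)
      ≥ Real.sqrt 2 * Real.sqrt (∫ x in a..b, (∫ t in a..x, |K x t| ^ 2)) :=
  stmt_5_general a b hab Φ Ψ K hΦ hΨ hK
end

section
/- Let (d_k)_{k≥1} be a sequence of positive reals with ∑_{k=1}^∞ d_k² = ∞, and set r_{k+1} = √(d_k + d_{k+1}) and b_k = r_{k+1}·r_{k+2}·d_{k+1}. Then ∑_{k=1}^∞ b_k = ∞. -/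
theorem stmt_10 (d : ℕ → ℝ) (hd : ∀ k, 0 < d k)
    (hdiv : ¬ Summable (fun k => d k ^ 2)) :
    ¬ Summable (fun k =>
      Real.sqrt (d k + d (k + 1)) * Real.sqrt (d (k + 1) + d (k + 2)) * d (k + 1)) := by
  intro hs
  apply hdiv
  rw [← summable_nat_add_iff 1]
  apply Summable.of_nonneg_of_le (fun k => sq_nonneg _) _ hs
  intro k
  have h1 : Real.sqrt (d (k + 1)) ≤ Real.sqrt (d k + d (k + 1)) :=
    Real.sqrt_le_sqrt (by linarith [(hd k).le])
  have h2 : Real.sqrt (d (k + 1)) ≤ Real.sqrt (d (k + 1) + d (k + 2)) :=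
    Real.sqrt_le_sqrt (by linarith [(hd (k + 2)).le])
  have hs1 : Real.sqrt (d (k + 1)) * Real.sqrt (d (k + 1)) = d (k + 1) :=
    Real.mul_self_sqrt (hd (k + 1)).le
  have hnn := Real.sqrt_nonneg (d (k + 1))
  calc d (k + 1) ^ 2 = Real.sqrt (d (k + 1)) * Real.sqrt (d (k + 1)) * d (k + 1) := by
        rw [hs1]; ring
    _ ≤ Real.sqrt (d k + d (k + 1)) * Real.sqrt (d (k + 1) + d (k + 2)) * d (k + 1) := by
        apply mul_le_mul_of_nonneg_right _ (hd (k + 1)).le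
        exact mul_le_mul h1 h2 hnn (Real.sqrt_nonneg _)
end

section
/- Let a < c < b, ρ = c − a, s = b − c, H an n×n real symmetric matrix, and K(x,t) the matrix-valued function with K(x,t) = (x−t)·I for a ≤ t ≤ x ≤ c or c ≤ t ≤ x ≤ b, and K(x,t) = (x−t)·I + (c−t)(x−c)·H for a ≤ t ≤ c ≤ x ≤ b. Then for each diagonal index i, ∫_a^b ∫_a^x |K(x,t)_{ii}|² dt dx ≥ (1/(3√3))·(ρs)²·(ρ+s)·|H_{ii} + (3/2)(1/ρ + 1/s)|. -/
/-!
On the diagonal, `K(x,t)ᵢᵢ` is the scalar Cauchy function with `h = Hᵢᵢ`. Splitting both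
integrals at `c`, its energy is the polynomial
`(ρ+s)⁴/12 + h(ρs)²(ρ+s)/3 + h²(ρs)³/9 = q²(ρs)³/9 + (ρ+s)⁴/12 - ρs(ρ+s)²/4`,
where `q = h + 3/2 (1/ρ + 1/s)`. Since `(ρ+s)² ≥ 4ρs`, this is at least
`q²(ρs)³/9 + ρs(ρ+s)²/12`, and AM-GM bounds that below by `(ρs)²(ρ+s)|q|/(3√3)`.
-/

open intervalIntegral Set

lemma integral_cubic_sub (c₀ c₁ c₂ c₃ d l r : ℝ) :
    ∫ x in l..r, (c₀ + c₁ * (x - d) + c₂ * (x - d) ^ 2 + c₃ * (x - d) ^ 3) =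
      (c₀ * (r - d) + c₁ / 2 * (r - d) ^ 2 + c₂ / 3 * (r - d) ^ 3 + c₃ / 4 * (r - d) ^ 4)
        - (c₀ * (l - d) + c₁ / 2 * (l - d) ^ 2 + c₂ / 3 * (l - d) ^ 3 + c₃ / 4 * (l - d) ^ 4) := by
  have hderiv : ∀ x, HasDerivAt
      (fun y => c₀ * (y - d) + c₁ / 2 * (y - d) ^ 2 + c₂ / 3 * (y - d) ^ 3 + c₃ / 4 * (y - d) ^ 4)
      (c₀ + c₁ * (x - d) + c₂ * (x - d) ^ 2 + c₃ * (x - d) ^ 3) x := fun x => by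
    have h := (hasDerivAt_id' x).sub_const d
    refine ((((h.const_mul c₀).add ((h.pow 2).const_mul (c₁ / 2))).add
      ((h.pow 3).const_mul (c₂ / 3))).add ((h.pow 4).const_mul (c₃ / 4))).congr_deriv ?_
    push_cast
    ring
  exact integral_eq_sub_of_hasDerivAt (fun x _ => hderiv x)
    (Continuous.intervalIntegrable (by fun_prop) _ _)

/-- The scalar Cauchy function of `-y'' + h δ(x - c) y = 0`: the factor `(c - t)⁺ (x - c)⁺`
vanishes off the region `t ≤ c ≤ x`, which makes the kernel jointly continuous. -/
def scalarCauchyKernel (h c x t : ℝ) : ℝ :=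
  (x - t) + max (c - t) 0 * max (x - c) 0 * h

lemma scalarCauchyKernel_eq_ite (h c x t : ℝ) :
    scalarCauchyKernel h c x t =
      if t ≤ c ∧ c ≤ x then (x - t) + (c - t) * (x - c) * h else x - t := by
  unfold scalarCauchyKernel
  split_ifs with htx
  · rw [max_eq_left (sub_nonneg.2 htx.1), max_eq_left (sub_nonneg.2 htx.2)]
  · rcases not_and_or.1 htx with htc | hcx
    · rw [max_eq_right (by linarith [not_le.1 htc])]; ring
    · rw [max_eq_right (a := x - c) (by linarith [not_le.1 hcx])]; ring

lemma scalarCauchyKernel_of_mem_uIcc {h c x t : ℝ} (ht : t ∈ uIcc c x) :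
    scalarCauchyKernel h c x t = x - t := by
  unfold scalarCauchyKernel
  rcases le_total c x with hcx | hxc
  · rw [uIcc_of_le hcx] at ht
    rw [max_eq_right (sub_nonpos.2 ht.1)]; ring
  · rw [max_eq_right (a := x - c) (sub_nonpos.2 hxc)]; ring

lemma integral_sq_scalarCauchyKernel (h : ℝ) {a c : ℝ} (hac : a ≤ c) (x : ℝ) :
    ∫ t in a..x, scalarCauchyKernel h c x t ^ 2 =
      (x - c) ^ 3 / 3 + (x - c) ^ 2 * (c - a) + (x - c) * (c - a) ^ 2 * (1 + max (x - c) 0 * h)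
        + (c - a) ^ 3 * (1 + max (x - c) 0 * h) ^ 2 / 3 := by
  set u := max (x - c) 0 * h
  have hcont : Continuous fun t => scalarCauchyKernel h c x t ^ 2 := by
    unfold scalarCauchyKernel; fun_prop
  rw [← integral_add_adjacent_intervals (b := c) (hcont.intervalIntegrable _ _)
    (hcont.intervalIntegrable _ _)]
  have hleft : ∫ t in a..c, scalarCauchyKernel h c x t ^ 2 = ∫ t in a..c,
      ((x - c) ^ 2 + -2 * (x - c) * (1 + u) * (t - c) + (1 + u) ^ 2 * (t - c) ^ 2 + 0 * (t - c) ^ 3) :=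
    integral_congr fun t ht => by
      rw [uIcc_of_le hac] at ht
      simp only [scalarCauchyKernel, max_eq_left (sub_nonneg.2 ht.2)]
      ring
  have hright : ∫ t in c..x, scalarCauchyKernel h c x t ^ 2 =
      ∫ t in c..x, (0 + 0 * (t - x) + 1 * (t - x) ^ 2 + 0 * (t - x) ^ 3) :=
    integral_congr fun t ht => by
      simp only [scalarCauchyKernel_of_mem_uIcc ht]
      ring
  rw [hleft, hright, integral_cubic_sub, integral_cubic_sub]
  ring

noncomputable def cauchyKernelEnergy (ρ s h : ℝ) : ℝ :=
  (ρ + s) ^ 4 / 12 + h * (ρ * s) ^ 2 * (ρ + s) / 3 + h ^ 2 * (ρ * s) ^ 3 / 9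

lemma integral_integral_sq_scalarCauchyKernel (h : ℝ) {a c b : ℝ} (hac : a ≤ c) (hcb : c ≤ b) :
    ∫ x in a..b, ∫ t in a..x, scalarCauchyKernel h c x t ^ 2 =
      cauchyKernelEnergy (c - a) (b - c) h := by
  set F : ℝ → ℝ := fun x => (x - c) ^ 3 / 3 + (x - c) ^ 2 * (c - a)
      + (x - c) * (c - a) ^ 2 * (1 + max (x - c) 0 * h)
      + (c - a) ^ 3 * (1 + max (x - c) 0 * h) ^ 2 / 3
  have hinner : ∀ x, ∫ t in a..x, scalarCauchyKernel h c x t ^ 2 = F x :=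
    integral_sq_scalarCauchyKernel h hac
  have hcont : Continuous F := by fun_prop
  simp only [hinner]
  rw [← integral_add_adjacent_intervals (b := c) (hcont.intervalIntegrable _ _)
    (hcont.intervalIntegrable _ _)]
  have hleft : ∫ x in a..c, F x =
      ∫ x in a..c, (0 + 0 * (x - a) + 0 * (x - a) ^ 2 + 1 / 3 * (x - a) ^ 3) :=
    integral_congr fun x hx => by
      rw [uIcc_of_le hac] at hx
      simp only [F, max_eq_right (sub_nonpos.2 hx.2)]
      ring
  have hright : ∫ x in c..b, F x =
      ∫ x in c..b, ((c - a) ^ 3 / 3 + ((c - a) ^ 2 + 2 / 3 * h * (c - a) ^ 3) * (x - c)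
        + ((c - a) + h * (c - a) ^ 2 + h ^ 2 * (c - a) ^ 3 / 3) * (x - c) ^ 2
        + 1 / 3 * (x - c) ^ 3) :=
    integral_congr fun x hx => by
      rw [uIcc_of_le hcb] at hx
      simp only [F, max_eq_left (sub_nonneg.2 hx.1)]
      ring
  rw [hleft, hright, integral_cubic_sub, integral_cubic_sub, cauchyKernelEnergy]
  ring

lemma cauchyKernelEnergy_eq_sq_add (ρ s h : ℝ) (hρ : ρ ≠ 0) (hs : s ≠ 0) :
    cauchyKernelEnergy ρ s h =
      (h + 3 / 2 * (1 / ρ + 1 / s)) ^ 2 * (ρ * s) ^ 3 / 9 + (ρ + s) ^ 4 / 12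
        - ρ * s * (ρ + s) ^ 2 / 4 := by
  unfold cauchyKernelEnergy
  field_simp
  ring

lemma le_cauchyKernelEnergy (ρ s h : ℝ) (hρ : 0 < ρ) (hs : 0 < s) :
    1 / (3 * √3) * (ρ * s) ^ 2 * (ρ + s) * |h + 3 / 2 * (1 / ρ + 1 / s)| ≤
      cauchyKernelEnergy ρ s h := by
  rw [cauchyKernelEnergy_eq_sq_add ρ s h hρ.ne' hs.ne', ← sq_abs (h + _)]
  set q := |h + 3 / 2 * (1 / ρ + 1 / s)|
  have hsqrt : √3 ^ 2 = 3 := Real.sq_sqrt (by norm_num)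
  have hcoef : 1 / (3 * √3) = √3 / 9 := by
    field_simp
    rw [hsqrt]
    norm_num
  rw [hcoef]
  have hρs : 0 < ρ * s := mul_pos hρ hs
  have hsq : (2 * (ρ * s) * q - (ρ + s) * √3) ^ 2 =
      4 * (ρ * s) ^ 2 * q ^ 2 - 4 * √3 * (ρ * s) * (ρ + s) * q + 3 * (ρ + s) ^ 2 := by
    rw [sub_sq, mul_pow (ρ + s), hsqrt]
    ring
  -- AM-GM for `q² (ρs)³ / 9 + ρs (ρ + s)² / 12`; the remainder is `(ρ + s)² (ρ - s)² / 12`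
  nlinarith [mul_nonneg hρs.le (sq_nonneg (2 * (ρ * s) * q - (ρ + s) * √3)),
    mul_nonneg (sq_nonneg (ρ + s)) (sq_nonneg (ρ - s))]

theorem stmt_13_general (n : ℕ) (a c b : ℝ) (hac : a < c) (hcb : c < b)
    (H : Matrix (Fin n) (Fin n) ℝ)
    (K : ℝ → ℝ → Matrix (Fin n) (Fin n) ℝ)
    (hK : ∀ x t, K x t = if t ≤ c ∧ c ≤ x
      then (x - t) • (1 : Matrix (Fin n) (Fin n) ℝ) + ((c - t) * (x - c)) • H
      else (x - t) • (1 : Matrix (Fin n) (Fin n) ℝ))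
    (i : Fin n) :
    ∫ x in a..b, (∫ t in a..x, |K x t i i| ^ 2)
      ≥ (1 / (3 * Real.sqrt 3)) * ((c - a) * (b - c)) ^ 2 * ((c - a) + (b - c))
        * |H i i + (3 / 2) * (1 / (c - a) + 1 / (b - c))| := by
  have hdiag : ∀ x t, K x t i i = scalarCauchyKernel (H i i) c x t := fun x t => by
    rw [hK, scalarCauchyKernel_eq_ite]
    split_ifs <;> simp [mul_comm]
  simp only [hdiag, sq_abs]
  rw [integral_integral_sq_scalarCauchyKernel (H i i) hac.le hcb.le]
  exact le_cauchyKernelEnergy (c - a) (b - c) (H i i) (sub_pos.2 hac) (sub_pos.2 hcb)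

theorem stmt_13 (n : ℕ) (a c b : ℝ) (hac : a < c) (hcb : c < b)
    (H : Matrix (Fin n) (Fin n) ℝ) (hH : H.IsSymm)
    (K : ℝ → ℝ → Matrix (Fin n) (Fin n) ℝ)
    (hK : ∀ x t, K x t = if t ≤ c ∧ c ≤ x
      then (x - t) • (1 : Matrix (Fin n) (Fin n) ℝ) + ((c - t) * (x - c)) • H
      else (x - t) • (1 : Matrix (Fin n) (Fin n) ℝ))
    (i : Fin n) :
    ∫ x in a..b, (∫ t in a..x, |K x t i i| ^ 2)
      ≥ (1 / (3 * Real.sqrt 3)) * ((c - a) * (b - c)) ^ 2 * ((c - a) + (b - c))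
        * |H i i + (3 / 2) * (1 / (c - a) + 1 / (b - c))| :=
  stmt_13_general n a c b hac hcb H K hK i
end
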